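/- For all n ≥ 1, the total number of right steps in all dispersed Dyck paths of length n is R(n) = 2^n − C(n, ⌊n/2⌋). -/

import Mathlib

inductive DStep | up | down | right
deriving DecidableEq, Repr

instance : Fintype DStep :=
  ⟨⟨{DStep.up, DStep.down, DStep.right}, by decide⟩, fun x => by cases x <;> decide⟩

/-- Run a dispersed Dyck path from height `h`; `none` if an illegal step occurs,
otherwise the final height. Down steps require positive height; right steps require height 0. -/
def DStep.run : ℕ → List DStep → Option ℕ
  | h, [] => some h
  | h, .up :: l => DStep.run (h + 1) l
  | h + 1, .down :: l => DStep.run h l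
  | 0, .down :: _ => none
  | 0, .right :: l => DStep.run 0 l
  | _ + 1, .right :: _ => none

/-- A dispersed Dyck path: starts and ends at height 0, all steps legal. -/
def IsDDP (l : List DStep) : Prop := DStep.run 0 l = some 0

instance : DecidablePred IsDDP := fun l => by unfold IsDDP; infer_instance

/-- The finset of all dispersed Dyck paths of length `n`. -/
def DDPs (n : ℕ) : Finset (List.Vector DStep n) :=
  Finset.univ.filter (fun v => IsDDP v.toList)

/-- Number of dispersed Dyck paths of length `n`. -/
def dD (n : ℕ) : ℕ := (DDPs n).card

/-- Total number of up steps over all DDPs of length `n`. -/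
def U (n : ℕ) : ℕ := ∑ v ∈ DDPs n, v.toList.count DStep.up

/-- Total number of down steps over all DDPs of length `n`. -/
def D (n : ℕ) : ℕ := ∑ v ∈ DDPs n, v.toList.count DStep.down

/-- Total number of right steps over all DDPs of length `n`. -/
def R (n : ℕ) : ℕ := ∑ v ∈ DDPs n, v.toList.count DStep.right

/-- `i` is the position of a 1-ascent in `l`: an up step with no adjacent up step. -/
def IsOneAscentAt (l : List DStep) (i : ℕ) : Prop :=
  l[i]? = some .up ∧ l[i + 1]? ≠ some .up ∧ (i = 0 ∨ l[i - 1]? ≠ some .up)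

instance (l : List DStep) : DecidablePred (IsOneAscentAt l) := fun i => by
  unfold IsOneAscentAt; infer_instance

/-- Number of 1-ascents in `l`. -/
def oneAsc (l : List DStep) : ℕ :=
  ((Finset.range l.length).filter (IsOneAscentAt l)).card

/-- Total number of 1-ascents over all DDPs of length `n`. -/
def A (n : ℕ) : ℕ := ∑ v ∈ DDPs n, oneAsc v.toList

/-- Signed final height of a plain path (ignoring any right steps). -/
def psum : List DStep → ℤ
  | [] => 0
  | .up :: l => 1 + psum l
  | .down :: l => -1 + psum l
  | .right :: l => psum l



/-! Let `W h n` be the number of walks of length `n` that are legal from height `h` and end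
at height `0`, and `Rₕ n` the total number of right steps in them. Splitting off the first step
gives `W (h + 1) (n + 1) = W (h + 2) n + W h n` and `W 0 (n + 1) = W 1 n + W 0 n`, so
`W h n = C(n, ⌈(n + h) / 2⌉)` by Pascal's rule. The right-step totals obey the same recursion,
with the extra term `W 0 n` at height `0`; the partial sums `∑_{j ≤ h} W j n` obey it too, with
the index shifted, and together they give `Rₕ n + ∑_{j ≤ h} W j n = 2 ^ n`. At `h = 0` this
reads `R n + C(n, ⌊n / 2⌋) = 2 ^ n`. -/

def walksToZero (h n : ℕ) : Finset (List.Vector DStep n) :=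
  Finset.univ.filter fun v => DStep.run h v.toList = some 0

def numWalks (h n : ℕ) : ℕ := (walksToZero h n).card

def numRightSteps (h n : ℕ) : ℕ := ∑ v ∈ walksToZero h n, v.toList.count .right

def vectorConsEquiv (n : ℕ) : DStep × List.Vector DStep n ≃ List.Vector DStep (n + 1) where
  toFun p := p.1 ::ᵥ p.2
  invFun v := (v.head, v.tail)
  left_inv _ := by simp
  right_inv _ := by simp

section Decomposition

variable {M : Type*} [AddCommMonoid M]

lemma sum_univ_dStep (f : DStep → M) : ∑ a, f a = f .up + f .down + f .right := by
  rw [show (Finset.univ : Finset DStep) = {.up, .down, .right} by decide]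
  simp [add_assoc]

lemma sum_vector_succ (n : ℕ) (f : List DStep → M) :
    ∑ v : List.Vector DStep (n + 1), f v.toList =
      ∑ a, ∑ w : List.Vector DStep n, f (a :: w.toList) := by
  rw [← (vectorConsEquiv n).sum_comp, Fintype.sum_prod_type]
  rfl

lemma sum_walksToZero_zero_succ (n : ℕ) (f : List DStep → M) :
    ∑ v ∈ walksToZero 0 (n + 1), f v.toList =
      ∑ w ∈ walksToZero 1 n, f (.up :: w.toList) +
        ∑ w ∈ walksToZero 0 n, f (.right :: w.toList) := by
  simp only [walksToZero, Finset.sum_filter]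
  rw [sum_vector_succ n fun l => if DStep.run 0 l = some 0 then f l else 0, sum_univ_dStep]
  simp [DStep.run]
  rfl

lemma sum_walksToZero_succ_succ (h n : ℕ) (f : List DStep → M) :
    ∑ v ∈ walksToZero (h + 1) (n + 1), f v.toList =
      ∑ w ∈ walksToZero (h + 2) n, f (.up :: w.toList) +
        ∑ w ∈ walksToZero h n, f (.down :: w.toList) := by
  simp only [walksToZero, Finset.sum_filter]
  rw [sum_vector_succ n fun l => if DStep.run (h + 1) l = some 0 then f l else 0, sum_univ_dStep]
  simp [DStep.run]
  rfl

lemma sum_walksToZero_zero_length (h : ℕ) (f : List DStep → M) :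
    ∑ v ∈ walksToZero h 0, f v.toList = if h = 0 then f [] else 0 := by
  rcases h with _ | h <;> simp [walksToZero, DStep.run]

end Decomposition

lemma numWalks_zero_length (h : ℕ) : numWalks h 0 = if h = 0 then 1 else 0 := by
  simp only [numWalks, Finset.card_eq_sum_ones]
  exact sum_walksToZero_zero_length h fun _ => 1

lemma numWalks_zero_succ (n : ℕ) : numWalks 0 (n + 1) = numWalks 1 n + numWalks 0 n := by
  simp only [numWalks, Finset.card_eq_sum_ones]
  exact sum_walksToZero_zero_succ n fun _ => 1

lemma numWalks_succ_succ (h n : ℕ) :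
    numWalks (h + 1) (n + 1) = numWalks (h + 2) n + numWalks h n := by
  simp only [numWalks, Finset.card_eq_sum_ones]
  exact sum_walksToZero_succ_succ h n fun _ => 1

lemma numRightSteps_zero_length (h : ℕ) : numRightSteps h 0 = 0 := by
  simp [numRightSteps]

lemma numRightSteps_zero_succ (n : ℕ) :
    numRightSteps 0 (n + 1) = numRightSteps 1 n + (numRightSteps 0 n + numWalks 0 n) := by
  simp [numRightSteps, sum_walksToZero_zero_succ, Finset.sum_add_distrib, numWalks]

lemma numRightSteps_succ_succ (h n : ℕ) :
    numRightSteps (h + 1) (n + 1) = numRightSteps (h + 2) n + numRightSteps h n := by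
  simp [numRightSteps, sum_walksToZero_succ_succ]

-- `(n + h + 1) / 2 = ⌈(n + h) / 2⌉` exceeds `n` exactly when `h > n`: no case split is needed.
lemma numWalks_eq_choose (h n : ℕ) : numWalks h n = n.choose ((n + h + 1) / 2) := by
  induction n generalizing h with
  | zero =>
    rcases h with _ | h
    · simp [numWalks_zero_length]
    · simp [numWalks_zero_length, Nat.choose_eq_zero_of_lt]
  | succ n ih =>
    rcases h with _ | h
    · rw [numWalks_zero_succ, ih, ih, Nat.add_zero, show (n + 1 + 1) / 2 = n / 2 + 1 by omega,
        Nat.choose_succ_succ', Nat.choose_symm_of_eq_add (show n = n / 2 + (n + 1) / 2 by omega),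
        add_comm]
    · rw [numWalks_succ_succ, ih, ih,
        show (n + 1 + (h + 1) + 1) / 2 = (n + h + 1) / 2 + 1 by omega, Nat.choose_succ_succ',
        show (n + (h + 2) + 1) / 2 = (n + h + 1) / 2 + 1 by omega, add_comm]

lemma numWalks_zero (n : ℕ) : numWalks 0 n = n.choose (n / 2) := by
  rw [numWalks_eq_choose, Nat.choose_symm_of_eq_add (show n = (n + 0 + 1) / 2 + n / 2 by omega)]

lemma sum_range_numWalks_succ (h n : ℕ) :
    ∑ j ∈ Finset.range (h + 1), numWalks j (n + 1) =
      ∑ j ∈ Finset.range (h + 2), numWalks j n + ∑ j ∈ Finset.range h, numWalks j n := by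
  induction h with
  | zero => simp [numWalks_zero_succ, Finset.sum_range_succ, add_comm]
  | succ h ih =>
    rw [Finset.sum_range_succ, ih, numWalks_succ_succ, Finset.sum_range_succ _ (h + 2),
      Finset.sum_range_succ _ h]
    ring

lemma numRightSteps_add_sum_numWalks (h n : ℕ) :
    numRightSteps h n + ∑ j ∈ Finset.range (h + 1), numWalks j n = 2 ^ n := by
  induction n generalizing h with
  | zero => simp [numRightSteps_zero_length, numWalks_zero_length]
  | succ n ih =>
    rcases h with _ | h
    · have ih₀ : numRightSteps 0 n + numWalks 0 n = 2 ^ n := by simpa using ih 0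
      have ih₁ : numRightSteps 1 n + ∑ j ∈ Finset.range 2, numWalks j n = 2 ^ n := ih 1
      rw [numRightSteps_zero_succ, sum_range_numWalks_succ, Finset.sum_range_zero, zero_add,
        pow_succ]
      omega
    · have ih₂ :
          numRightSteps (h + 2) n + ∑ j ∈ Finset.range (h + 1 + 2), numWalks j n = 2 ^ n :=
        ih (h + 2)
      rw [numRightSteps_succ_succ, sum_range_numWalks_succ, pow_succ]
      linarith [ih h]

lemma R_eq_numRightSteps (n : ℕ) : R n = numRightSteps 0 n := rfl

theorem right_closed_general (n : ℕ) : R n = 2 ^ n - n.choose (n / 2) := by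
  have h := numRightSteps_add_sum_numWalks 0 n
  rw [Finset.sum_range_one, numWalks_zero] at h
  rw [R_eq_numRightSteps]
  omega

/-- For `n ≥ 1`, the total number of right steps in all DDPs of length `n` is
`2^n − C(n, ⌊n/2⌋)`. -/
theorem right_closed (n : ℕ) (hn : 1 ≤ n) : R n = 2 ^ n - n.choose (n / 2) :=
  right_closed_general n
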